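/- arXiv:1605.04061 — 3 statements merged into one kernel-verified Lean document; each statement's English description precedes it below -/
import Mathlib

section
/- In ℂ[x₂,x₃,x₄], set ℒ̃₂ = ℒ₂ + x₂·ℒ₀. Then ℒ̃₂ x₂ = (2/3)·ℒ₁(ℒ₁ x₂) (the heat equation identity in the nonholonomic frame), and the commutator satisfies [ℒ₁, ℒ̃₂] = x₃·ℒ₀, i.e. ℒ₁(ℒ̃₂P) − ℒ̃₂(ℒ₁P) = x₃·ℒ₀P for every polynomial P ∈ ℂ[x₂,x₃,x₄]; in particular [ℒ₁, ℒ̃₂] ≠ 0. -/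
open MvPolynomial

noncomputable section

/-- The polynomial ring ℂ[x₂,x₃,x₄]; `X 0 = x₂`, `X 1 = x₃`, `X 2 = x₄`. -/
abbrev R3 : Type := MvPolynomial (Fin 3) ℂ

def x2 : R3 := X 0
def x3 : R3 := X 1
def x4 : R3 := X 2

/-- ℒ₀ = 2x₂∂/∂x₂ + 3x₃∂/∂x₃ + 4x₄∂/∂x₄ -/
def L0 (P : R3) : R3 :=
  2 * x2 * pderiv (0 : Fin 3) P + 3 * x3 * pderiv (1 : Fin 3) P + 4 * x4 * pderiv (2 : Fin 3) P

/-- ℒ₁ = x₃∂/∂x₂ + x₄∂/∂x₃ + 12x₂x₃∂/∂x₄ -/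
def L1 (P : R3) : R3 :=
  x3 * pderiv (0 : Fin 3) P + x4 * pderiv (1 : Fin 3) P + 12 * x2 * x3 * pderiv (2 : Fin 3) P

/-- ℒ₂ = ((2/3)x₄ − 2x₂²)∂/∂x₂ + 3x₂x₃∂/∂x₃ + (3x₃² + 2x₂x₄)∂/∂x₄ -/
def L2 (P : R3) : R3 :=
  (C (2/3 : ℂ) * x4 - 2 * x2 ^ 2) * pderiv (0 : Fin 3) P + 3 * x2 * x3 * pderiv (1 : Fin 3) P
    + (3 * x3 ^ 2 + 2 * x2 * x4) * pderiv (2 : Fin 3) P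

/-- ℒ̃₂ = ℒ₂ + x₂·ℒ₀ -/
def Lt2 (P : R3) : R3 := L2 P + x2 * L0 P

/-!
All operators involved are vector fields, i.e. derivations of `ℂ[x₂,x₃,x₄]`. The commutator of two
derivations is again a derivation, and a derivation of a polynomial ring is determined by its values
on the variables, so `[ℒ₁, ℒ̃₂] = x₃ ℒ₀` reduces to three polynomial identities, one per variable.
-/

@[simp]
theorem Derivation.map_ofNat {R A M : Type*} [CommSemiring R] [CommSemiring A] [Algebra R A]
    [AddCommMonoid M] [Module A M] [Module R M] (D : Derivation R A M) (n : ℕ) [n.AtLeastTwo] :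
    D (no_index (OfNat.ofNat n : A)) = 0 :=
  D.map_natCast n

theorem MvPolynomial.mkDerivation_apply_eq_sum_pderiv {R σ : Type*} [CommSemiring R] [Fintype σ]
    (f : σ → MvPolynomial σ R) (p : MvPolynomial σ R) :
    mkDerivation R f p = ∑ i, f i * pderiv i p := by
  classical
  have sum_apply (q : MvPolynomial σ R) : (∑ i, f i • pderiv i) q = ∑ i, f i * pderiv i q := by
    rw [← Derivation.coeFnAddMonoidHom_apply, map_sum, Finset.sum_apply]
    rfl
  suffices h : mkDerivation R f = ∑ i, f i • pderiv i by rw [h, sum_apply]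
  refine derivation_ext fun j => ?_
  simp [sum_apply, pderiv_X, Pi.single_apply]

def derivL0 : Derivation ℂ R3 R3 := mkDerivation ℂ ![2 * x2, 3 * x3, 4 * x4]

def derivL1 : Derivation ℂ R3 R3 := mkDerivation ℂ ![x3, x4, 12 * x2 * x3]

-- The coefficients are `ℒ̃₂ x₂`, `ℒ̃₂ x₃`, `ℒ̃₂ x₄`, computed from `ℒ₂ + x₂ ℒ₀`.
def derivLt2 : Derivation ℂ R3 R3 :=
  mkDerivation ℂ ![C (2/3 : ℂ) * x4, 6 * x2 * x3, 3 * x3 ^ 2 + 6 * x2 * x4]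

theorem L0_eq_derivL0 (P : R3) : L0 P = derivL0 P := by
  simp [L0, derivL0, mkDerivation_apply_eq_sum_pderiv, Fin.sum_univ_three]

theorem L1_eq_derivL1 (P : R3) : L1 P = derivL1 P := by
  simp [L1, derivL1, mkDerivation_apply_eq_sum_pderiv, Fin.sum_univ_three]

theorem Lt2_eq_derivLt2 (P : R3) : Lt2 P = derivLt2 P := by
  simp only [Lt2, L2, L0, derivLt2, mkDerivation_apply_eq_sum_pderiv, Fin.sum_univ_three]
  simp only [Matrix.cons_val_zero, Matrix.cons_val_one, Matrix.cons_val]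
  ring

theorem C_two_thirds_mul_twelve : (C (2/3 : ℂ) : R3) * 12 = 8 := by
  rw [← map_ofNat C, ← map_mul, ← map_ofNat C]
  norm_num

theorem lie_derivL1_derivLt2 : ⁅derivL1, derivLt2⁆ = x3 • derivL0 := by
  refine derivation_ext fun i => ?_
  fin_cases i <;>
    simp only [Derivation.commutator_apply, Derivation.coe_smul, Pi.smul_apply, derivL0, derivL1,
      derivLt2, x2, x3, x4, Fin.zero_eta, Fin.mk_one, Fin.reduceFinMk, mkDerivation_X,
      Matrix.cons_val_zero, Matrix.cons_val_one, Matrix.cons_val, map_add, Derivation.leibniz,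
      Derivation.leibniz_pow, derivation_C, Derivation.map_ofNat, smul_eq_mul, nsmul_eq_mul]
  · linear_combination X 0 * X 1 * C_two_thirds_mul_twelve
  · ring
  · linear_combination -(X 1 * X 2) * C_two_thirds_mul_twelve

theorem heat_equation_nonholonomic_frame :
    Lt2 x2 = C (2/3 : ℂ) * L1 (L1 x2) ∧
    (∀ P : R3, L1 (Lt2 P) - Lt2 (L1 P) = x3 * L0 P) ∧
    (fun P : R3 => L1 (Lt2 P) - Lt2 (L1 P)) ≠ (fun _ : R3 => 0) := by
  have commutator (P : R3) : L1 (Lt2 P) - Lt2 (L1 P) = x3 * L0 P := by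
    simpa [L0_eq_derivL0, L1_eq_derivL1, Lt2_eq_derivLt2, Derivation.commutator_apply] using
      congr($lie_derivL1_derivLt2 P)
  refine ⟨?_, commutator, fun h => ?_⟩
  · simp [Lt2_eq_derivLt2, L1_eq_derivL1, derivLt2, derivL1, x2, x3, x4]
  · have h2 := congrFun h x2
    rw [commutator, L0_eq_derivL0] at h2
    simp [derivL0, x2, x3, X_ne_zero] at h2
end
end

section
/- Let x₂, x₃, x₄, z₄, z₅, z₆ : ℝ² → ℂ be smooth functions of (u₁, u₃) satisfying systems S₁ and S₃. Then the functions U = 2x₂ and V = 2z₄ satisfy the system of equations (primes denote ∂/∂u₁ and dots denote ∂/∂u₃): V''' = 3(UV)' − 2V̇, U''' = 3(U²)' + 4U̇, and V' = U̇. -/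
noncomputable section

/-- Partial derivative with respect to the first coordinate `u₁`. -/
def d1 (f : ℝ × ℝ → ℂ) : ℝ × ℝ → ℂ := fun p => deriv (fun s => f (s, p.2)) p.1

/-- Partial derivative with respect to the second coordinate `u₃`. -/
def d3 (f : ℝ × ℝ → ℂ) : ℝ × ℝ → ℂ := fun p => deriv (fun s => f (p.1, s)) p.2

lemma slice1_diff {f : ℝ × ℝ → ℂ} (hf : ContDiff ℝ (⊤ : ℕ∞) f) (p : ℝ × ℝ) :
    DifferentiableAt ℝ (fun s => f (s, p.2)) p.1 :=
  ((hf.comp (contDiff_id.prodMk contDiff_const)).differentiable (by simp)).differentiableAt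

lemma slice3_diff {f : ℝ × ℝ → ℂ} (hf : ContDiff ℝ (⊤ : ℕ∞) f) (p : ℝ × ℝ) :
    DifferentiableAt ℝ (fun s => f (p.1, s)) p.2 :=
  ((hf.comp (contDiff_const.prodMk contDiff_id)).differentiable (by simp)).differentiableAt

lemma d1_const_mul (c : ℂ) {f : ℝ × ℝ → ℂ} (hf : ContDiff ℝ (⊤ : ℕ∞) f) :
    d1 (fun q => c * f q) = fun p => c * d1 f p :=
  funext fun p => deriv_const_mul c (slice1_diff hf p)

lemma d3_const_mul (c : ℂ) {f : ℝ × ℝ → ℂ} (hf : ContDiff ℝ (⊤ : ℕ∞) f) :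
    d3 (fun q => c * f q) = fun p => c * d3 f p :=
  funext fun p => deriv_const_mul c (slice3_diff hf p)

lemma d1_mul {f g : ℝ × ℝ → ℂ} (hf : ContDiff ℝ (⊤ : ℕ∞) f) (hg : ContDiff ℝ (⊤ : ℕ∞) g) :
    d1 (fun q => f q * g q) = fun p => d1 f p * g p + f p * d1 g p :=
  funext fun p => deriv_mul (slice1_diff hf p) (slice1_diff hg p)

/-- If smooth `x₂,x₃,x₄,z₄,z₅,z₆ : ℝ² → ℂ` satisfy systems `S₁` and `S₃`, then
`U = 2x₂` and `V = 2z₄` satisfy `V''' = 3(UV)' − 2V̇`, `U''' = 3(U²)' + 4U̇`, `V' = U̇`. -/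
theorem KdV_system_for_U_V (x2 x3 x4 z4 z5 z6 : ℝ × ℝ → ℂ)
    (hx2 : ContDiff ℝ (⊤ : ℕ∞) x2) (hx3 : ContDiff ℝ (⊤ : ℕ∞) x3) (hx4 : ContDiff ℝ (⊤ : ℕ∞) x4)
    (hz4 : ContDiff ℝ (⊤ : ℕ∞) z4) (hz5 : ContDiff ℝ (⊤ : ℕ∞) z5) (hz6 : ContDiff ℝ (⊤ : ℕ∞) z6)
    -- system S₁
    (e1 : ∀ p, d1 x2 p = x3 p) (e2 : ∀ p, d1 x3 p = x4 p)
    (e3 : ∀ p, d1 x4 p = 4 * (3 * x2 p * x3 p + z5 p))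
    (e4 : ∀ p, d1 z4 p = z5 p) (e5 : ∀ p, d1 z5 p = z6 p)
    (e6 : ∀ p, d1 z6 p = 4 * (2 * x2 p * z5 p + x3 p * z4 p))
    -- system S₃
    (f1 : ∀ p, d3 x2 p = z5 p) (f2 : ∀ p, d3 x3 p = z6 p)
    (f3 : ∀ p, d3 x4 p = 4 * (2 * x2 p * z5 p + x3 p * z4 p))
    (f4 : ∀ p, d3 z4 p = x3 p * z4 p - x2 p * z5 p)
    (f5 : ∀ p, d3 z5 p = x4 p * z4 p - x2 p * z6 p)
    (f6 : ∀ p, d3 z6 p = 8 * x2 p * (x3 p * z4 p - x2 p * z5 p)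
      + (x4 p * z5 p - x3 p * z6 p) + 4 * z4 p * z5 p)
    (U V : ℝ × ℝ → ℂ) (hU : U = fun p => 2 * x2 p) (hV : V = fun p => 2 * z4 p) :
    (∀ p, d1 (d1 (d1 V)) p = 3 * d1 (fun q => U q * V q) p - 2 * d3 V p) ∧
    (∀ p, d1 (d1 (d1 U)) p = 3 * d1 (fun q => (U q) ^ 2) p + 4 * d3 U p) ∧
    (∀ p, d1 V p = d3 U p) := by
  subst hU hV
  -- first derivatives
  have A1 : d1 (fun q => (2:ℂ) * z4 q) = fun p => 2 * z5 p := by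
    rw [d1_const_mul 2 hz4]; funext p; rw [e4]
  have A2 : d1 (fun p => (2:ℂ) * z5 p) = fun p => 2 * z6 p := by
    rw [d1_const_mul 2 hz5]; funext p; rw [e5]
  have B1 : d1 (fun q => (2:ℂ) * x2 q) = fun p => 2 * x3 p := by
    rw [d1_const_mul 2 hx2]; funext p; rw [e1]
  have B2 : d1 (fun p => (2:ℂ) * x3 p) = fun p => 2 * x4 p := by
    rw [d1_const_mul 2 hx3]; funext p; rw [e2]
  have hUV : (fun q => ((2:ℂ) * x2 q) * (2 * z4 q)) = fun q => (4:ℂ) * (x2 q * z4 q) := by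
    funext q; ring
  have hsq : (fun q => ((2:ℂ) * x2 q) ^ 2) = fun q => (4:ℂ) * (x2 q * x2 q) := by
    funext q; ring
  refine ⟨?_, ?_, ?_⟩
  · intro p
    beta_reduce
    rw [A1, A2, d1_const_mul 2 hz6, hUV, d1_const_mul 4 (hx2.mul hz4),
      d1_mul hx2 hz4, d3_const_mul 2 hz4]
    simp only [e1, e4, e6, f4]
    ring
  · intro p
    beta_reduce
    rw [B1, B2, d1_const_mul 2 hx4, hsq, d1_const_mul 4 (hx2.mul hx2),
      d1_mul hx2 hx2, d3_const_mul 2 hx2]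
    simp only [e1, e3, f1]
    ring
  · intro p
    beta_reduce
    rw [A1, d3_const_mul 2 hx2]
    simp only [f1]

end
end

section
/- Let λ₄, λ₆, λ₈ ∈ ℂ and let U : ℝ → ℂ be a four-times differentiable function satisfying U'''' = 10UU'' + 5(U')² − 10U³ − 8λ₄U + 16λ₆ together with the first-integral relation U'U''' − ½(U'')² − 5U(U')² + (5/2)U⁴ + 4λ₄U² − 16λ₆U + 8λ₄² − 32λ₈ = 0. Then the function E₂ = (U''')² − 10U(U'')² + 2(U')²U'' + 4(5U³ + 4λ₄U − 8λ₆)U'' − 2(15U² + 4λ₄)(U')² + 6U⁵ + 16λ₄U³ − 96λ₆U² + 96(λ₄² − 4λ₈)U has identically vanishing derivative, i.e. E₂ is constant along U. -/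
/-!
Differentiating `E₂` along `U` gives `2U'''·(U'''' − N) + 12U'·E₁`, where `U'''' = N` is the
fourth-order equation and `E₁ = 0` is the first integral; both factors vanish.
-/

theorem ContDiff.hasDerivAt_iteratedDeriv {𝕜 F : Type*} [NontriviallyNormedField 𝕜]
    [NormedAddCommGroup F] [NormedSpace 𝕜 F] {f : 𝕜 → F} {n : WithTop ℕ∞} {k : ℕ}
    (hf : ContDiff 𝕜 n f) (hk : k < n) (x : 𝕜) :
    HasDerivAt (iteratedDeriv k f) (iteratedDeriv (k + 1) f x) x := by
  rw [iteratedDeriv_succ]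
  exact (hf.differentiable_iteratedDeriv k hk x).hasDerivAt

noncomputable section Integrals

variable (lam4 lam6 lam8 : ℂ)

def fourthOrderRHS (u₀ u₁ u₂ : ℂ) : ℂ :=
  10 * u₀ * u₂ + 5 * u₁ ^ 2 - 10 * u₀ ^ 3 - 8 * lam4 * u₀ + 16 * lam6

def E₁ (u₀ u₁ u₂ u₃ : ℂ) : ℂ :=
  u₁ * u₃ - 1/2 * u₂ ^ 2 - 5 * u₀ * u₁ ^ 2 + 5/2 * u₀ ^ 4 + 4 * lam4 * u₀ ^ 2
    - 16 * lam6 * u₀ + 8 * lam4 ^ 2 - 32 * lam8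

def E₂ (u₀ u₁ u₂ u₃ : ℂ) : ℂ :=
  u₃ ^ 2 - 10 * u₀ * u₂ ^ 2 + 2 * u₁ ^ 2 * u₂ + 4 * (5 * u₀ ^ 3 + 4 * lam4 * u₀ - 8 * lam6) * u₂
    - 2 * (15 * u₀ ^ 2 + 4 * lam4) * u₁ ^ 2
    + 6 * u₀ ^ 5 + 16 * lam4 * u₀ ^ 3 - 96 * lam6 * u₀ ^ 2 + 96 * (lam4 ^ 2 - 4 * lam8) * u₀

theorem hasDerivAt_E₂ {u₀ u₁ u₂ u₃ : ℝ → ℂ} {u₄ : ℂ} {t : ℝ}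
    (h₀ : HasDerivAt u₀ (u₁ t) t) (h₁ : HasDerivAt u₁ (u₂ t) t)
    (h₂ : HasDerivAt u₂ (u₃ t) t) (h₃ : HasDerivAt u₃ u₄ t) :
    HasDerivAt (fun s => E₂ lam4 lam6 lam8 (u₀ s) (u₁ s) (u₂ s) (u₃ s))
      (2 * u₃ t * (u₄ - fourthOrderRHS lam4 lam6 (u₀ t) (u₁ t) (u₂ t))
        + 12 * u₁ t * E₁ lam4 lam6 lam8 (u₀ t) (u₁ t) (u₂ t) (u₃ t)) t := by
  have h := ((((((((h₃.fun_pow 2).sub ((h₀.const_mul 10).mul (h₂.fun_pow 2))).add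
    (((h₁.fun_pow 2).const_mul 2).mul h₂)).add
    ((((((h₀.fun_pow 3).const_mul 5).add (h₀.const_mul (4 * lam4))).sub_const
      (8 * lam6)).const_mul 4).mul h₂)).sub
    (((((h₀.fun_pow 2).const_mul 15).add_const (4 * lam4)).const_mul 2).mul
      (h₁.fun_pow 2))).add
    ((h₀.fun_pow 5).const_mul 6)).add ((h₀.fun_pow 3).const_mul (16 * lam4))).sub
    ((h₀.fun_pow 2).const_mul (96 * lam6))).add (h₀.const_mul (96 * (lam4 ^ 2 - 4 * lam8)))
  refine h.congr_deriv ?_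
  simp only [E₁, fourthOrderRHS, Pi.add_apply]
  push_cast
  ring

end Integrals

/-- If a four-times differentiable `U : ℝ → ℂ` satisfies
`U'''' = 10UU'' + 5(U')² − 10U³ − 8λ₄U + 16λ₆` and the first-integral relation
`U'U''' − ½(U'')² − 5U(U')² + (5/2)U⁴ + 4λ₄U² − 16λ₆U + 8λ₄² − 32λ₈ = 0`, then
`E₂ = (U''')² − 10U(U'')² + 2(U')²U'' + 4(5U³ + 4λ₄U − 8λ₆)U'' − 2(15U² + 4λ₄)(U')²`
`+ 6U⁵ + 16λ₄U³ − 96λ₆U² + 96(λ₄² − 4λ₈)U` has identically vanishing derivative. -/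
theorem first_integral_E2 (lam4 lam6 lam8 : ℂ) (U : ℝ → ℂ)
    (hU : ContDiff ℝ 4 U)
    (h : ∀ t, iteratedDeriv 4 U t = 10 * U t * iteratedDeriv 2 U t
      + 5 * (deriv U t) ^ 2 - 10 * (U t) ^ 3 - 8 * lam4 * U t + 16 * lam6)
    (hE1 : ∀ t, deriv U t * iteratedDeriv 3 U t - 1/2 * (iteratedDeriv 2 U t) ^ 2
      - 5 * U t * (deriv U t) ^ 2 + 5/2 * (U t) ^ 4 + 4 * lam4 * (U t) ^ 2
      - 16 * lam6 * U t + 8 * lam4 ^ 2 - 32 * lam8 = 0) :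
    ∀ t, deriv (fun t => (iteratedDeriv 3 U t) ^ 2
      - 10 * U t * (iteratedDeriv 2 U t) ^ 2
      + 2 * (deriv U t) ^ 2 * iteratedDeriv 2 U t
      + 4 * (5 * (U t) ^ 3 + 4 * lam4 * U t - 8 * lam6) * iteratedDeriv 2 U t
      - 2 * (15 * (U t) ^ 2 + 4 * lam4) * (deriv U t) ^ 2
      + 6 * (U t) ^ 5 + 16 * lam4 * (U t) ^ 3 - 96 * lam6 * (U t) ^ 2
      + 96 * (lam4 ^ 2 - 4 * lam8) * U t) t = 0 := by
  intro t
  have hU' k (hk : k < 4) := hU.hasDerivAt_iteratedDeriv (k := k) (by exact_mod_cast hk) t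
  have h₀ : HasDerivAt U (deriv U t) t := by simpa using hU' 0 (by norm_num)
  have h₁ : HasDerivAt (deriv U) (iteratedDeriv 2 U t) t := by simpa using hU' 1 (by norm_num)
  have hResidual : iteratedDeriv 4 U t - fourthOrderRHS lam4 lam6 (U t) (deriv U t)
      (iteratedDeriv 2 U t) = 0 := sub_eq_zero.mpr (h t)
  have hDeriv := hasDerivAt_E₂ lam4 lam6 lam8 h₀ h₁ (hU' 2 (by norm_num)) (hU' 3 (by norm_num))
  rw [hResidual, show E₁ lam4 lam6 lam8 _ _ _ _ = 0 from hE1 t] at hDeriv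
  simp only [mul_zero, zero_add] at hDeriv
  exact hDeriv.deriv
end
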